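/- arXiv:2210.10082 — 3 statements merged into one kernel-verified Lean document; each statement's English description precedes it below -/
import Mathlib

section
/- With notation as above (g = x^2+y^2z+yz^2+xyz over a field of characteristic 2, X, Y, Z truncated series with lowest degrees p, q, r respectively), if l = 2p, l < 2q + r, and l < q + 2r, then the coefficient of t^l in g(X,Y,Z) equals x_p^2. -/
open Finset

/-- The variable `x_u` (resp. `y_v`, `z_w`) in `k[x_*, y_*, z_*]`. -/
noncomputable def xv (k : Type*) [Field k] (u : ℕ) : MvPolynomial (Fin 3 × ℕ) k :=
  MvPolynomial.X (0, u)

noncomputable def yv (k : Type*) [Field k] (v : ℕ) : MvPolynomial (Fin 3 × ℕ) k :=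
  MvPolynomial.X (1, v)

noncomputable def zv (k : Type*) [Field k] (w : ℕ) : MvPolynomial (Fin 3 × ℕ) k :=
  MvPolynomial.X (2, w)

/-- The truncated series `∑_{i=a}^m c_i t^i`. -/
noncomputable def truncSeries (k : Type*) [Field k]
    (c : ℕ → MvPolynomial (Fin 3 × ℕ) k) (a m : ℕ) :
    Polynomial (MvPolynomial (Fin 3 × ℕ) k) :=
  ∑ i ∈ Finset.Icc a m, Polynomial.C (c i) * Polynomial.X ^ i

/-- `g(X,Y,Z)` for `g = x^2 + y^2 z + y z^2 + x y z` and truncated series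
`X, Y, Z` with lowest orders `p, q, r`. -/
noncomputable def gSeries (k : Type*) [Field k] (p q r m : ℕ) :
    Polynomial (MvPolynomial (Fin 3 × ℕ) k) :=
  (truncSeries k (xv k) p m) ^ 2
    + (truncSeries k (yv k) q m) ^ 2 * truncSeries k (zv k) r m
    + truncSeries k (yv k) q m * (truncSeries k (zv k) r m) ^ 2
    + truncSeries k (xv k) p m * truncSeries k (yv k) q m * truncSeries k (zv k) r m

/-! Each truncated series is divisible by `t` to the power of its lowest order, so a product of
them is divisible by `t` to the sum of the orders. Under the hypotheses only `X ^ 2` reaches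
degree `l = 2p`, and there its coefficient is the product of the two lowest coefficients. -/

namespace Polynomial

variable {R : Type*} [CommSemiring R]

theorem coeff_mul_add_of_X_pow_dvd {P Q : R[X]} {a b : ℕ} (hP : X ^ a ∣ P) (hQ : X ^ b ∣ Q) :
    (P * Q).coeff (a + b) = P.coeff a * Q.coeff b := by
  obtain ⟨P', rfl⟩ := hP
  obtain ⟨Q', rfl⟩ := hQ
  rw [mul_mul_mul_comm, ← pow_add, coeff_X_pow_mul', if_pos le_rfl, Nat.sub_self,
    mul_coeff_zero, ← coeff_X_pow_mul P' a 0, ← coeff_X_pow_mul Q' b 0, zero_add, zero_add]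

theorem coeff_mul_eq_zero_of_X_pow_dvd {P Q : R[X]} {a b n : ℕ} (hP : X ^ a ∣ P)
    (hQ : X ^ b ∣ Q) (hn : n < a + b) : (P * Q).coeff n = 0 :=
  X_pow_dvd_iff.mp (by rw [pow_add]; exact mul_dvd_mul hP hQ) n hn

end Polynomial

open Polynomial

section truncSeries

variable (k : Type*) [Field k] (c : ℕ → MvPolynomial (Fin 3 × ℕ) k) (a m : ℕ)

theorem X_pow_dvd_truncSeries : X ^ a ∣ truncSeries k c a m :=
  Finset.dvd_sum fun _ hi => dvd_mul_of_dvd_right (pow_dvd_pow X (Finset.mem_Icc.mp hi).1) _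

theorem coeff_truncSeries_self (h : a ≤ m) : (truncSeries k c a m).coeff a = c a := by
  simp [truncSeries, coeff_X_pow, h]

end truncSeries

theorem coeff_gSeries_eq_sq_general (k : Type*) [Field k] (m p q r l : ℕ)
    (hl : l ≤ m)
    (h1 : l = 2 * p) (h2 : l < 2 * q + r) (h3 : l < q + 2 * r) :
    (gSeries k p q r m).coeff l = (xv k p) ^ 2 := by
  have hX := X_pow_dvd_truncSeries k (xv k) p m
  have hY := X_pow_dvd_truncSeries k (yv k) q m
  have hZ := X_pow_dvd_truncSeries k (zv k) r m
  have hY2 : X ^ (2 * q) ∣ truncSeries k (yv k) q m ^ 2 := by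
    rw [mul_comm, pow_mul]; exact pow_dvd_pow_of_dvd hY 2
  have hZ2 : X ^ (2 * r) ∣ truncSeries k (zv k) r m ^ 2 := by
    rw [mul_comm, pow_mul]; exact pow_dvd_pow_of_dvd hZ 2
  have hXY : X ^ (p + q) ∣ truncSeries k (xv k) p m * truncSeries k (yv k) q m := by
    rw [pow_add]; exact mul_dvd_mul hX hY
  have hx : (truncSeries k (xv k) p m ^ 2).coeff l = xv k p ^ 2 := by
    rw [h1, sq, two_mul, coeff_mul_add_of_X_pow_dvd hX hX,
      coeff_truncSeries_self k _ p m (by omega), sq]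
  rw [gSeries, coeff_add, coeff_add, coeff_add, hx,
    coeff_mul_eq_zero_of_X_pow_dvd hY2 hZ h2, coeff_mul_eq_zero_of_X_pow_dvd hY hZ2 h3,
    coeff_mul_eq_zero_of_X_pow_dvd hXY hZ (by omega), add_zero, add_zero, add_zero]

/-- Lemma 4.3(2): if `l = 2p`, `l < 2q + r` and `l < q + 2r`, then the coefficient
of `t^l` in `g(X,Y,Z)` equals `x_p^2`. -/
theorem coeff_gSeries_eq_sq (k : Type*) [Field k] [CharP k 2] (m p q r l : ℕ)
    (hp : 1 ≤ p) (hq : 1 ≤ q) (hr : 1 ≤ r) (hl : l ≤ m)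
    (h1 : l = 2 * p) (h2 : l < 2 * q + r) (h3 : l < q + 2 * r) :
    (gSeries k p q r m).coeff l = (xv k p) ^ 2 :=
  coeff_gSeries_eq_sq_general k m p q r l hl h1 h2 h3
end

section
/- Let k be a field of characteristic 2, f = x^2 + y^2*z + y*z^2, m >= 5, and define f^{(j)} in R_m as the t^j coefficient of f(sum x_i t^i, sum y_i t^i, sum z_i t^i) in R_m[t]/(t^{m+1}). Then modulo the ideal L = (x_0, x_1, x_2, y_0, y_1, z_0, z_1) one has f^{(j)} = 0 for all 0 <= j <= 5. -/
open Finset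

/-- The series `∑_{i=0}^m c_i t^i`. -/
noncomputable def serUpTo (k : Type*) [Field k]
    (c : ℕ → MvPolynomial (Fin 3 × ℕ) k) (m : ℕ) :
    Polynomial (MvPolynomial (Fin 3 × ℕ) k) :=
  ∑ i ∈ Finset.range (m + 1), Polynomial.C (c i) * Polynomial.X ^ i

/-- The coefficient polynomial `f^{(j)}`, where `f = x^2 + y^2 z + y z^2`:
the coefficient of `t^j` in `f(∑ x_i t^i, ∑ y_i t^i, ∑ z_i t^i)`. -/
noncomputable def fCoeff (k : Type*) [Field k] (m j : ℕ) :
    MvPolynomial (Fin 3 × ℕ) k :=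
  ((serUpTo k (xv k) m) ^ 2
    + (serUpTo k (yv k) m) ^ 2 * serUpTo k (zv k) m
    + serUpTo k (yv k) m * (serUpTo k (zv k) m) ^ 2).coeff j

/-- The coefficient polynomial `g^{(j)}`, where `g = x^2 + y^2 z + y z^2 + x y z`. -/
noncomputable def gCoeff (k : Type*) [Field k] (m j : ℕ) :
    MvPolynomial (Fin 3 × ℕ) k :=
  ((serUpTo k (xv k) m) ^ 2
    + (serUpTo k (yv k) m) ^ 2 * serUpTo k (zv k) m
    + serUpTo k (yv k) m * (serUpTo k (zv k) m) ^ 2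
    + serUpTo k (xv k) m * serUpTo k (yv k) m * serUpTo k (zv k) m).coeff j

/-! Modulo `L`, the series `x(t)` is divisible by `t^3` and `y(t)`, `z(t)` by `t^2`, so every
monomial of `f(x(t), y(t), z(t))` is divisible by `t^6`. -/

open Polynomial

theorem Polynomial.X_pow_dvd_map_mk_iff {R : Type*} [CommRing R] (I : Ideal R) (p : R[X])
    (n : ℕ) : X ^ n ∣ p.map (Ideal.Quotient.mk I) ↔ ∀ d < n, p.coeff d ∈ I := by
  simp only [X_pow_dvd_iff, coeff_map, Ideal.Quotient.eq_zero_iff_mem]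

theorem Polynomial.X_pow_six_dvd_sq_add_sq_mul_add_mul_sq {R : Type*} [CommRing R]
    {a b c : R[X]} (ha : X ^ 3 ∣ a) (hb : X ^ 2 ∣ b) (hc : X ^ 2 ∣ c) :
    X ^ 6 ∣ a ^ 2 + b ^ 2 * c + b * c ^ 2 := by
  obtain ⟨a, rfl⟩ := ha
  obtain ⟨b, rfl⟩ := hb
  obtain ⟨c, rfl⟩ := hc
  exact ⟨a ^ 2 + b ^ 2 * c + b * c ^ 2, by ring⟩

theorem coeff_serUpTo {k : Type*} [Field k] (c : ℕ → MvPolynomial (Fin 3 × ℕ) k) (m d : ℕ) :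
    (serUpTo k c m).coeff d = if d ≤ m then c d else 0 := by
  simp only [serUpTo, finsetSum_coeff, coeff_C_mul_X_pow, Finset.sum_ite_eq,
    Finset.mem_range, Nat.lt_succ_iff]

theorem X_pow_dvd_map_serUpTo {k : Type*} [Field k] (I : Ideal (MvPolynomial (Fin 3 × ℕ) k))
    {c : ℕ → MvPolynomial (Fin 3 × ℕ) k} {n : ℕ} (m : ℕ) (hc : ∀ d < n, c d ∈ I) :
    X ^ n ∣ (serUpTo k c m).map (Ideal.Quotient.mk I) := by
  refine (X_pow_dvd_map_mk_iff I _ n).2 fun d hd => ?_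
  rw [coeff_serUpTo]
  split_ifs
  exacts [hc d hd, I.zero_mem]

theorem fCoeff_mem_L322_general (k : Type*) [Field k] (m : ℕ)
    (j : ℕ) (hj : j ≤ 5) :
    fCoeff k m j ∈ Ideal.span
      {xv k 0, xv k 1, xv k 2, yv k 0, yv k 1, zv k 0, zv k 1} := by
  set I := Ideal.span {xv k 0, xv k 1, xv k 2, yv k 0, yv k 1, zv k 0, zv k 1}
  have hx : X ^ 3 ∣ (serUpTo k (xv k) m).map (Ideal.Quotient.mk I) :=
    X_pow_dvd_map_serUpTo I m fun d hd => by
      interval_cases d <;> exact Ideal.subset_span (by simp)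
  have hy : X ^ 2 ∣ (serUpTo k (yv k) m).map (Ideal.Quotient.mk I) :=
    X_pow_dvd_map_serUpTo I m fun d hd => by
      interval_cases d <;> exact Ideal.subset_span (by simp)
  have hz : X ^ 2 ∣ (serUpTo k (zv k) m).map (Ideal.Quotient.mk I) :=
    X_pow_dvd_map_serUpTo I m fun d hd => by
      interval_cases d <;> exact Ideal.subset_span (by simp)
  have h6 := X_pow_six_dvd_sq_add_sq_mul_add_mul_sq hx hy hz
  simp only [← Polynomial.map_pow, ← Polynomial.map_mul, ← Polynomial.map_add] at h6
  exact (X_pow_dvd_map_mk_iff I _ 6).1 h6 j (by omega)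

/-- For `m ≥ 5`, modulo the ideal `L_{322} = (x_0, x_1, x_2, y_0, y_1, z_0, z_1)`
one has `f^{(j)} = 0` for all `0 ≤ j ≤ 5`. -/
theorem fCoeff_mem_L322 (k : Type*) [Field k] [CharP k 2] (m : ℕ) (hm : 5 ≤ m)
    (j : ℕ) (hj : j ≤ 5) :
    fCoeff k m j ∈ Ideal.span
      {xv k 0, xv k 1, xv k 2, yv k 0, yv k 1, zv k 0, zv k 1} :=
  fCoeff_mem_L322_general k m j hj
end

section
/- Let k be a field of characteristic 2, f = x^2 + y^2*z + y*z^2, m >= 6, and f^{(j)} as above. Then for 6 <= l <= m, modulo the ideal L_{322} = (x_0, x_1, x_2, y_0, y_1, z_0, z_1), f^{(l)} is congruent to f^{(l-6)}(x_3,...,x_{l-3}, y_2,...,y_{l-4}, z_2,...,z_{l-4}), i.e., the (l-6)-th coefficient polynomial with variables shifted by the weights (3,2,2). -/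
open Finset

/-- The weight-shift renaming `x_i ↦ x_{i+3}`, `y_i ↦ y_{i+2}`, `z_i ↦ z_{i+2}`. -/
def wtShift : Fin 3 × ℕ → Fin 3 × ℕ :=
  fun p => (p.1, p.2 + if p.1 = 0 then 3 else 2)

/-!
Write `x(t) = ∑_{i ≤ m} x_i t^i` and similarly `y(t), z(t)`, and let `'` denote the renaming
`wtShift`. Modulo `L₃₂₂` the low coefficients vanish, so `x(t) ≡ t^3 x'(t)`,
`y(t) ≡ t^2 y'(t)` and `z(t) ≡ t^2 z'(t)` modulo `t^(m+1)`. As `f` is weighted homogeneous of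
degree 6 for the weights `(3, 2, 2)`, this gives `f(x(t), y(t), z(t)) ≡ t^6 f(x'(t), y'(t), z'(t))`
modulo `t^(m+1)`, and comparing the coefficients of `t^l` for `l ≤ m` is the claim.
-/

open Polynomial

def fPoly {R : Type*} [CommRing R] (x y z : R) : R :=
  x ^ 2 + y ^ 2 * z + y * z ^ 2

theorem map_fPoly {R S : Type*} [CommRing R] [CommRing S] (ψ : R →+* S) (x y z : R) :
    ψ (fPoly x y z) = fPoly (ψ x) (ψ y) (ψ z) := by
  simp only [fPoly, map_add, map_mul, map_pow]

theorem fPoly_weighted_homogeneous {R : Type*} [CommRing R] (t x y z : R) :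
    fPoly (t ^ 3 * x) (t ^ 2 * y) (t ^ 2 * z) = t ^ 6 * fPoly x y z := by
  simp only [fPoly]
  ring

theorem fPoly_sub_fPoly_mem {R : Type*} [CommRing R] (I : Ideal R) {x y z x' y' z' : R}
    (hx : x - x' ∈ I) (hy : y - y' ∈ I) (hz : z - z' ∈ I) :
    fPoly x y z - fPoly x' y' z' ∈ I := by
  rw [← Ideal.Quotient.eq] at hx hy hz ⊢
  rw [map_fPoly, map_fPoly, hx, hy, hz]

theorem Polynomial.coeff_eq_of_X_pow_dvd_sub {R : Type*} [CommRing R] {p q : R[X]} {n : ℕ}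
    (h : X ^ (n + 1) ∣ p - q) : p.coeff n = q.coeff n := by
  rw [← sub_eq_zero, ← coeff_sub]
  exact X_pow_dvd_iff.1 h n n.lt_succ_self

theorem fCoeff_eq_coeff_fPoly (k : Type*) [Field k] (m j : ℕ) :
    fCoeff k m j =
      (fPoly (serUpTo k (xv k) m) (serUpTo k (yv k) m) (serUpTo k (zv k) m)).coeff j :=
  rfl

theorem map_fCoeff (k : Type*) [Field k] {S : Type*} [CommRing S]
    (ψ : MvPolynomial (Fin 3 × ℕ) k →+* S) (m j : ℕ) :
    ψ (fCoeff k m j) = (fPoly ((serUpTo k (xv k) m).map ψ) ((serUpTo k (yv k) m).map ψ)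
      ((serUpTo k (zv k) m).map ψ)).coeff j := by
  rw [fCoeff_eq_coeff_fPoly, ← coeff_map, ← coe_mapRingHom, map_fPoly]

theorem serUpTo_coeff (k : Type*) [Field k] (c : ℕ → MvPolynomial (Fin 3 × ℕ) k) (m j : ℕ) :
    (serUpTo k c m).coeff j = if j ≤ m then c j else 0 := by
  simp only [serUpTo, finsetSum_coeff, coeff_C_mul, coeff_X_pow, mul_ite, mul_one,
    mul_zero, Finset.sum_ite_eq, Finset.mem_range, Nat.lt_succ_iff]

theorem X_pow_dvd_map_serUpTo_sub (k : Type*) [Field k] {S : Type*} [CommRing S]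
    (ψ ψ' : MvPolynomial (Fin 3 × ℕ) k →+* S) (c : ℕ → MvPolynomial (Fin 3 × ℕ) k) (d m : ℕ)
    (hlow : ∀ i < d, ψ (c i) = 0) (hshift : ∀ i, ψ' (c i) = ψ (c (i + d))) :
    X ^ (m + 1) ∣ (serUpTo k c m).map ψ - X ^ d * (serUpTo k c m).map ψ' := by
  rw [X_pow_dvd_iff]
  intro j hj
  rw [coeff_sub, coeff_X_pow_mul', sub_eq_zero, coeff_map, serUpTo_coeff, if_pos (by omega)]
  split_ifs with hdj
  · rw [coeff_map, serUpTo_coeff, if_pos (by omega), hshift, Nat.sub_add_cancel hdj]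
  · exact hlow j (by omega)

theorem fCoeff_mod_L322_shift_general (k : Type*) [Field k] (m l : ℕ)
    (hl6 : 6 ≤ l) (hlm : l ≤ m) :
    fCoeff k m l - MvPolynomial.rename wtShift (fCoeff k m (l - 6))
      ∈ Ideal.span
        {xv k 0, xv k 1, xv k 2, yv k 0, yv k 1, zv k 0, zv k 1} := by
  set L := Ideal.span {xv k 0, xv k 1, xv k 2, yv k 0, yv k 1, zv k 0, zv k 1}
  let Q := Ideal.Quotient.mk L
  let φ := Q.comp (MvPolynomial.rename wtShift).toRingHom
  have hQ : ∀ p ∈ ({xv k 0, xv k 1, xv k 2, yv k 0, yv k 1, zv k 0, zv k 1} :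
      Set (MvPolynomial (Fin 3 × ℕ) k)), Q p = 0 := fun p hp =>
    Ideal.Quotient.eq_zero_iff_mem.2 (Ideal.subset_span hp)
  have hφ : ∀ a i, φ (MvPolynomial.X (a, i)) = Q (MvPolynomial.X (wtShift (a, i))) := fun _ _ =>
    congrArg Q (MvPolynomial.rename_X _ _)
  have hx := X_pow_dvd_map_serUpTo_sub k Q φ (xv k) 3 m
    (fun i hi => hQ _ (by interval_cases i <;> simp)) (fun i => hφ 0 i)
  have hy := X_pow_dvd_map_serUpTo_sub k Q φ (yv k) 2 m
    (fun i hi => hQ _ (by interval_cases i <;> simp)) (fun i => hφ 1 i)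
  have hz := X_pow_dvd_map_serUpTo_sub k Q φ (zv k) 2 m
    (fun i hi => hQ _ (by interval_cases i <;> simp)) (fun i => hφ 2 i)
  have hf := fPoly_sub_fPoly_mem (Ideal.span {X ^ (m + 1)})
    (Ideal.mem_span_singleton.2 hx) (Ideal.mem_span_singleton.2 hy)
    (Ideal.mem_span_singleton.2 hz)
  rw [fPoly_weighted_homogeneous, Ideal.mem_span_singleton] at hf
  rw [← Ideal.Quotient.eq]
  change Q (fCoeff k m l) = φ (fCoeff k m (l - 6))
  rw [map_fCoeff, map_fCoeff, ← coeff_X_pow_mul _ 6 (l - 6), Nat.sub_add_cancel hl6]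
  exact coeff_eq_of_X_pow_dvd_sub ((pow_dvd_pow X (by omega)).trans hf)

/-- For `6 ≤ l ≤ m`, modulo `L_{322} = (x_0,x_1,x_2,y_0,y_1,z_0,z_1)` the
coefficient `f^{(l)}` is congruent to `f^{(l-6)}(x_3,...,x_{l-3},
y_2,...,y_{l-4}, z_2,...,z_{l-4})`, i.e. to `f^{(l-6)}` with variables shifted
by the weights `(3,2,2)`. -/
theorem fCoeff_mod_L322_shift (k : Type*) [Field k] [CharP k 2] (m l : ℕ)
    (hm : 6 ≤ m) (hl6 : 6 ≤ l) (hlm : l ≤ m) :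
    fCoeff k m l - MvPolynomial.rename wtShift (fCoeff k m (l - 6))
      ∈ Ideal.span
        {xv k 0, xv k 1, xv k 2, yv k 0, yv k 1, zv k 0, zv k 1} :=
  fCoeff_mod_L322_shift_general k m l hl6 hlm
end
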